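/- Let H be a Hopf algebra, B an H-module algebra, and form the cross product B⋊H. If B and H are *-algebras, H is a Hopf *-algebra, and the action satisfies the unitarity condition (h▷b)* = (Sh)*▷b*, then (b⊗h)* := (1⊗h*)(b*⊗1) defines a *-algebra structure on B⋊H containing B and H as *-subalgebras. -/

import Mathlib

/-!
Writing `b ⊗ h = (b ⊗ 1)(1 ⊗ h)`, antimultiplicativity of `*` reduces to its behaviour under
right multiplication by the generators `1 ⊗ g` and `c ⊗ 1`, plus associativity of the cross
product in the cases where one factor is a generator. The only step using the antipode is
involutivity, i.e. `((1 ⊗ h)(c ⊗ 1))* = c* ⊗ h*`: by unitarity the left side is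
`Σ (S(h₁) h₂)* ▷ c* ⊗ h₃*`, which the antipode axiom collapses to `c* ⊗ h*`. The behaviour under
right multiplication by `c ⊗ 1` is in turn a consequence of involutivity.
-/

open scoped TensorProduct

/-- Interpret a list of pairs as a sum of pure tensors (Sweedler representation). -/
noncomputable def toT {H : Type} [AddCommMonoid H] [Module ℂ H] (l : List (H × H)) :
    H ⊗[ℂ] H := (l.map fun p => p.1 ⊗ₜ[ℂ] p.2).sum

open TensorProduct LinearMap Coalgebra HopfAlgebra

theorem map_toT {H M F : Type} [AddCommMonoid H] [Module ℂ H] [AddCommMonoid M]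
    [FunLike F (H ⊗[ℂ] H) M] [AddMonoidHomClass F (H ⊗[ℂ] H) M] (φ : F)
    (l : List (H × H)) : φ (toT l) = (l.map fun p => φ (p.1 ⊗ₜ p.2)).sum := by
  rw [toT, map_list_sum, List.map_map]
  rfl

theorem star_toT {H : Type} [AddCommMonoid H] [Module ℂ H] [StarAddMonoid H] [StarModule ℂ H]
    (l : List (H × H)) : star (toT l) = toT (l.map fun p => (star p.1, star p.2)) := by
  rw [← starAddEquiv_apply, map_toT, toT, List.map_map]
  rfl

section CrossProduct

variable {R B H : Type*} [CommSemiring R] [Semiring B] [Algebra R B] [Semiring H]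
  [HopfAlgebra R H]

theorem rTensor_mul_antipode_rTensor_comul_comul (k : H) :
    (mul' R H ∘ₗ (antipode R).rTensor H).rTensor H ((comul (R := R)).rTensor H (comul k)) =
      1 ⊗ₜ k := by
  rw [← rTensor_comp_apply, LinearMap.comp_assoc, mul_antipode_rTensor_comul, rTensor_comp_apply,
    rTensor_counit_comul]
  simp

structure IsModuleAlgebra (act : H →ₗ[R] B →ₗ[R] B) : Prop where
  mul_act : ∀ g h b, act (g * h) b = act g (act h b)
  one_act : ∀ b, act 1 b = b
  -- `h ▷ (b c) = Σ (h₁ ▷ b) (h₂ ▷ c)`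
  act_mul : ∀ h b c, act h (b * c) = mul' R B (map (act.flip b) (act.flip c) (comul (R := R) h))
  act_one : ∀ h, act h 1 = counit (R := R) h • (1 : B)

/-- `(b ⊗ h)(c ⊗ g) = Σ b (h₁ ▷ c) ⊗ h₂ g` -/
def IsCrossProductMul (act : H →ₗ[R] B →ₗ[R] B)
    (mul : B ⊗[R] H →ₗ[R] B ⊗[R] H →ₗ[R] B ⊗[R] H) : Prop :=
  ∀ b h c g, mul (b ⊗ₜ h) (c ⊗ₜ g) =
    map (mulLeft R b) (mulRight R g) ((act.flip c).rTensor H (comul (R := R) h))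

variable {act : H →ₗ[R] B →ₗ[R] B} {mul : B ⊗[R] H →ₗ[R] B ⊗[R] H →ₗ[R] B ⊗[R] H}

theorem IsModuleAlgebra.rTensor_flip_one_comul (hA : IsModuleAlgebra act) (h : H) :
    (act.flip 1).rTensor H (comul (R := R) h) = 1 ⊗ₜ h := by
  have : act.flip 1 = Algebra.linearMap R B ∘ₗ counit := by
    ext g; simp [hA.act_one, Algebra.smul_def]
  rw [this, rTensor_comp_apply, rTensor_counit_comul]
  simp

namespace IsCrossProductMul

theorem tmul_one_mul (hM : IsCrossProductMul act mul) (hA : IsModuleAlgebra act) (c : B) :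
    mul (c ⊗ₜ 1) = (mulLeft R c).rTensor H := by
  ext d m
  simp [hM _ _ d m, Algebra.TensorProduct.one_def, hA.one_act]

theorem mul_one_tmul (hM : IsCrossProductMul act mul) (hA : IsModuleAlgebra act) (b : B) (h g : H) :
    mul (b ⊗ₜ h) (1 ⊗ₜ g) = b ⊗ₜ (h * g) := by
  simp [hM _ _ 1 g, hA.rTensor_flip_one_comul]

theorem tmul_eq_mul (hM : IsCrossProductMul act mul) (hA : IsModuleAlgebra act) (b : B) (h : H) :
    b ⊗ₜ h = mul (b ⊗ₜ 1) (1 ⊗ₜ h) := by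
  simp [hM.tmul_one_mul hA]

theorem tmul_one_mul_assoc (hM : IsCrossProductMul act mul) (hA : IsModuleAlgebra act) (c : B)
    (y w : B ⊗[R] H) : mul (mul (c ⊗ₜ 1) y) w = mul (c ⊗ₜ 1) (mul y w) := by
  induction y using TensorProduct.induction_on with
  | zero => simp
  | add y y' hy hy' => simp [hy, hy']
  | tmul b h =>
    induction w using TensorProduct.induction_on with
    | zero => simp
    | add w w' hw hw' => simp [hw, hw']
    | tmul d m =>
      simp only [hM.tmul_one_mul hA, rTensor_tmul, mulLeft_apply, hM _ _ d m]
      rw [mulLeft_mul, ← rTensor_comp_map, LinearMap.comp_apply]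

theorem one_tmul_mul_one_tmul_mul (hM : IsCrossProductMul act mul) (hA : IsModuleAlgebra act)
    (x y : H) (w : B ⊗[R] H) : mul (1 ⊗ₜ x) (mul (1 ⊗ₜ y) w) = mul (1 ⊗ₜ (x * y)) w := by
  induction w using TensorProduct.induction_on with
  | zero => simp
  | add w w' hw hw' => simp only [map_add, hw, hw']
  | tmul d m =>
    rw [hM, hM, Bialgebra.comul_mul]
    generalize comul (R := R) y = u
    induction u using TensorProduct.induction_on with
    | zero => simp
    | add u u' hu hu' => simp only [map_add, mul_add, hu, hu']
    | tmul y₁ y₂ =>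
      rw [rTensor_tmul, map_tmul, hM]
      generalize comul (R := R) x = t
      induction t using TensorProduct.induction_on with
      | zero => simp
      | add t t' ht ht' => simp only [map_add, add_mul, ht, ht']
      | tmul x₁ x₂ => simp [hA.mul_act, mul_assoc]

theorem mul_tmul_one_mul_assoc (hM : IsCrossProductMul act mul) (hA : IsModuleAlgebra act) (c : B)
    (z w : B ⊗[R] H) : mul (mul z (c ⊗ₜ 1)) w = mul z (mul (c ⊗ₜ 1) w) := by
  induction z using TensorProduct.induction_on with
  | zero => simp
  | add z z' hz hz' => simp only [map_add, LinearMap.add_apply, hz, hz']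
  | tmul b h =>
    induction w using TensorProduct.induction_on with
    | zero => simp
    | add w w' hw hw' => simp only [map_add, hw, hw']
    | tmul d m =>
      have hcd : act.flip (c * d) = (mul' R B ∘ₗ map (act.flip c) (act.flip d)) ∘ₗ comul := by
        ext g; simp [hA.act_mul]
      rw [hM.tmul_one_mul hA, rTensor_tmul, mulLeft_apply, hM, hM, hcd, rTensor_comp_apply,
        ← coassoc_symm_apply]
      generalize comul (R := R) h = t
      induction t using TensorProduct.induction_on with
      | zero => simp
      | add t t' ht ht' => simp only [map_add, LinearMap.add_apply, ht, ht']
      | tmul x z =>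
        rw [rTensor_tmul, map_tmul, mulRight_apply, mul_one, hM, lTensor_tmul]
        generalize comul (R := R) z = u
        induction u using TensorProduct.induction_on with
        | zero => simp
        | add u u' hu hu' => simp only [map_add, tmul_add, hu, hu']
        | tmul z₁ z₂ => simp

end IsCrossProductMul

variable [StarRing R] [StarRing B] [StarModule R B] [StarRing H] [StarModule R H]

/-- `(b ⊗ h)* = Σ ((h*)₁ ▷ b*) ⊗ (h*)₂`, which is `(1 ⊗ h*)(b* ⊗ 1)` in the cross product. -/
noncomputable def crossStar (act : H →ₗ[R] B →ₗ[R] B) : B ⊗[R] H →ₗ⋆[R] B ⊗[R] H :=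
  lift (lcomp R _ (comul (R := R) (A := H)) ∘ₗ rTensorHom H ∘ₗ act.flip) ∘ₛₗ
    (starLinearEquiv R).toLinearMap

theorem crossStar_tmul (act : H →ₗ[R] B →ₗ[R] B) (b : B) (h : H) :
    crossStar act (b ⊗ₜ h) = (act.flip (star b)).rTensor H (comul (R := R) (star h)) := by
  simp [crossStar]

theorem IsCrossProductMul.crossStar_tmul_eq_mul (hM : IsCrossProductMul act mul) (b : B) (h : H) :
    crossStar act (b ⊗ₜ h) = mul (1 ⊗ₜ star h) (star b ⊗ₜ 1) := by
  rw [crossStar_tmul, hM]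
  simp

-- `(Σ x ▷ c ⊗ y)* = Σ (S(x) y₁)* ▷ c* ⊗ y₂*` for `t = Σ x ⊗ y`
theorem crossStar_rTensor_flip (hA : IsModuleAlgebra act)
    (hunitary : ∀ h b, star (act h b) = act (star (antipode R h)) (star b))
    (hcomul_star : ∀ x : H, comul (R := R) (star x) = star (comul x)) (c : B) (t : H ⊗[R] H) :
    crossStar act ((act.flip c).rTensor H t) = (act.flip (star c)).rTensor H
      (star ((mul' R H ∘ₗ (antipode R).rTensor H).rTensor H
        ((TensorProduct.assoc R H H H).symm ((comul (R := R)).lTensor H t)))) := by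
  induction t using TensorProduct.induction_on with
  | zero => simp
  | add t t' ht ht' => simp only [map_add, star_add, ht, ht']
  | tmul x y =>
    rw [rTensor_tmul, crossStar_tmul, flip_apply, hunitary, hcomul_star, lTensor_tmul]
    generalize comul (R := R) y = u
    induction u using TensorProduct.induction_on with
    | zero => simp
    | add u u' hu hu' => simp only [map_add, star_add, tmul_add, hu, hu']
    | tmul y₁ y₂ => simp [hA.mul_act, star_mul]

theorem crossStar_crossStar (hA : IsModuleAlgebra act)
    (hunitary : ∀ h b, star (act h b) = act (star (antipode R h)) (star b))
    (hcomul_star : ∀ x : H, comul (R := R) (star x) = star (comul x)) (x : B ⊗[R] H) :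
    crossStar act (crossStar act x) = x := by
  induction x using TensorProduct.induction_on with
  | zero => simp
  | add x y hx hy => simp only [map_add, hx, hy]
  | tmul b h =>
    rw [crossStar_tmul, crossStar_rTensor_flip hA hunitary hcomul_star, coassoc_symm_apply,
      rTensor_mul_antipode_rTensor_comul_comul]
    simp [hA.one_act]

namespace IsCrossProductMul

theorem crossStar_tmul_one_mul (hM : IsCrossProductMul act mul) (hA : IsModuleAlgebra act)
    (b : B) (y : B ⊗[R] H) :
    crossStar act (mul (b ⊗ₜ 1) y) = mul (crossStar act y) (star b ⊗ₜ 1) := by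
  induction y using TensorProduct.induction_on with
  | zero => simp
  | add y y' hy hy' => simp only [map_add, LinearMap.add_apply, hy, hy']
  | tmul d m =>
    have hprod : (star d * star b) ⊗ₜ[R] (1 : H) = mul (star d ⊗ₜ 1) (star b ⊗ₜ 1) := by
      rw [hM.tmul_one_mul hA, rTensor_tmul, mulLeft_apply]
    rw [hM.tmul_one_mul hA, rTensor_tmul, mulLeft_apply, hM.crossStar_tmul_eq_mul, star_mul, hprod,
      ← hM.mul_tmul_one_mul_assoc hA, hM.crossStar_tmul_eq_mul]

theorem crossStar_mul_tmul_one (hM : IsCrossProductMul act mul) (hA : IsModuleAlgebra act)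
    (hunitary : ∀ h b, star (act h b) = act (star (antipode R h)) (star b))
    (hcomul_star : ∀ x : H, comul (R := R) (star x) = star (comul x)) (c : B) (z : B ⊗[R] H) :
    crossStar act (mul z (c ⊗ₜ 1)) = mul (star c ⊗ₜ 1) (crossStar act z) := by
  induction z using TensorProduct.induction_on with
  | zero => simp
  | add z z' hz hz' => simp only [map_add, LinearMap.add_apply, hz, hz']
  | tmul b h =>
    have hcomm : crossStar act (mul (1 ⊗ₜ h) (c ⊗ₜ 1)) = star c ⊗ₜ star h := by
      rw [← star_star c, ← star_star h, ← hM.crossStar_tmul_eq_mul,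
        crossStar_crossStar hA hunitary hcomul_star, star_star, star_star]
    calc crossStar act (mul (b ⊗ₜ h) (c ⊗ₜ 1))
        = crossStar act (mul (b ⊗ₜ 1) (mul (1 ⊗ₜ h) (c ⊗ₜ 1))) := by
          rw [← hM.tmul_one_mul_assoc hA, ← hM.tmul_eq_mul hA]
      _ = mul (star c ⊗ₜ star h) (star b ⊗ₜ 1) := by
          rw [hM.crossStar_tmul_one_mul hA, hcomm]
      _ = mul (star c ⊗ₜ 1) (crossStar act (b ⊗ₜ h)) := by
          rw [hM.tmul_eq_mul hA (star c) (star h), hM.tmul_one_mul_assoc hA,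
            hM.crossStar_tmul_eq_mul]

theorem crossStar_mul_one_tmul (hM : IsCrossProductMul act mul) (hA : IsModuleAlgebra act)
    (g : H) (z : B ⊗[R] H) :
    crossStar act (mul z (1 ⊗ₜ g)) = mul (1 ⊗ₜ star g) (crossStar act z) := by
  induction z using TensorProduct.induction_on with
  | zero => simp
  | add z z' hz hz' => simp only [map_add, LinearMap.add_apply, hz, hz']
  | tmul b h =>
    rw [hM.mul_one_tmul hA, hM.crossStar_tmul_eq_mul, star_mul, ← hM.one_tmul_mul_one_tmul_mul hA,
      ← hM.crossStar_tmul_eq_mul]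

theorem crossStar_mul (hM : IsCrossProductMul act mul) (hA : IsModuleAlgebra act)
    (hunitary : ∀ h b, star (act h b) = act (star (antipode R h)) (star b))
    (hcomul_star : ∀ x : H, comul (R := R) (star x) = star (comul x)) (x y : B ⊗[R] H) :
    crossStar act (mul x y) = mul (crossStar act y) (crossStar act x) := by
  induction y using TensorProduct.induction_on with
  | zero => simp
  | add y y' hy hy' => simp only [map_add, LinearMap.add_apply, hy, hy']
  | tmul c g =>
    calc crossStar act (mul x (c ⊗ₜ g))
        = crossStar act (mul (mul x (c ⊗ₜ 1)) (1 ⊗ₜ g)) := by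
          rw [hM.tmul_eq_mul hA c g, hM.mul_tmul_one_mul_assoc hA]
      _ = mul (1 ⊗ₜ star g) (mul (star c ⊗ₜ 1) (crossStar act x)) := by
          rw [hM.crossStar_mul_one_tmul hA, hM.crossStar_mul_tmul_one hA hunitary hcomul_star]
      _ = mul (crossStar act (c ⊗ₜ g)) (crossStar act x) := by
          rw [← hM.mul_tmul_one_mul_assoc hA, hM.crossStar_tmul_eq_mul]

end IsCrossProductMul

end CrossProduct

theorem cross_product_star_structure_general
    {B H : Type} [Ring B] [Algebra ℂ B] [StarRing B] [StarModule ℂ B]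
    [Ring H] [HopfAlgebra ℂ H] [StarRing H] [StarModule ℂ H]
    (ρ : H → List (H × H))
    (hρ : ∀ x, Coalgebra.comul (R := ℂ) x = toT (ρ x))
    -- Hopf *-algebra axioms for H
    (hcomulStar : ∀ x : H, Coalgebra.comul (R := ℂ) (star x)
        = toT ((ρ x).map fun p => (star p.1, star p.2)))
    -- the action of `H` on `B`, making `B` an `H`-module algebra
    (act : H →ₗ[ℂ] B →ₗ[ℂ] B)
    (hactmul : ∀ (g h : H) (b : B), act (g * h) b = act g (act h b))
    (hactone : ∀ b : B, act 1 b = b)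
    (hmodalg : ∀ (h : H) (b c : B),
        act h (b * c) = ((ρ h).map fun q => act q.1 b * act q.2 c).sum)
    (hmodone : ∀ h : H, act h 1 = Coalgebra.counit (R := ℂ) h • (1 : B))
    -- the unitarity condition
    (huni : ∀ (h : H) (b : B), star (act h b) = act (star (HopfAlgebra.antipode (R := ℂ) h)) (star b))
    -- the cross product `B ⋊ H` built on `B ⊗ H`
    (mulD : (B ⊗[ℂ] H) →ₗ[ℂ] (B ⊗[ℂ] H) →ₗ[ℂ] (B ⊗[ℂ] H))
    (hmulD : ∀ (b : B) (h : H) (c : B) (g : H),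
        mulD (b ⊗ₜ[ℂ] h) (c ⊗ₜ[ℂ] g)
          = ((ρ h).map fun q => (b * act q.1 c) ⊗ₜ[ℂ] (q.2 * g)).sum) :
    ∃ st : B ⊗[ℂ] H → B ⊗[ℂ] H,
      (∀ x y, st (x + y) = st x + st y) ∧
      (∀ (c : ℂ) (x : B ⊗[ℂ] H), st (c • x) = (starRingEnd ℂ) c • st x) ∧
      -- the defining formula `(b ⊗ h)* = (1 ⊗ h*)(b* ⊗ 1)`
      (∀ (b : B) (h : H),
          st (b ⊗ₜ[ℂ] h) = mulD ((1 : B) ⊗ₜ[ℂ] star h) (star b ⊗ₜ[ℂ] (1 : H))) ∧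
      -- involution
      (∀ x, st (st x) = x) ∧
      -- antimultiplicativity
      (∀ x y, st (mulD x y) = mulD (st y) (st x)) ∧
      -- `B` and `H` are *-subalgebras
      (∀ b : B, st (b ⊗ₜ[ℂ] (1 : H)) = star b ⊗ₜ[ℂ] (1 : H)) ∧
      (∀ h : H, st ((1 : B) ⊗ₜ[ℂ] h) = (1 : B) ⊗ₜ[ℂ] star h) := by
  have hA : IsModuleAlgebra act :=
    ⟨hactmul, hactone, fun h b c => by
      rw [hmodalg, hρ, ← LinearMap.comp_apply, map_toT]; simp, hmodone⟩
  have hM : IsCrossProductMul act mulD := fun b h c g => by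
    rw [hmulD, hρ, ← LinearMap.comp_apply, map_toT]; simp
  have hcomul_star : ∀ x : H, comul (R := ℂ) (star x) = star (comul x) := fun x => by
    rw [hcomulStar, hρ, star_toT]
  refine ⟨crossStar act, map_add _, map_smulₛₗ _, hM.crossStar_tmul_eq_mul,
    crossStar_crossStar hA huni hcomul_star, hM.crossStar_mul hA huni hcomul_star,
    fun b => ?_, fun h => ?_⟩
  · rw [hM.crossStar_tmul_eq_mul, star_one, hM.tmul_one_mul hA, rTensor_tmul, mulLeft_apply,
      one_mul]
  · rw [hM.crossStar_tmul_eq_mul, star_one, hM.mul_one_tmul hA, mul_one]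

/-- If `B` is an `H`-module algebra for a Hopf *-algebra `H`, `B` is a
*-algebra, and the action obeys the unitarity condition `(h ▷ b)* = (S h)* ▷ b*`, then
`(b ⊗ h)* := (1 ⊗ h*)(b* ⊗ 1)` defines a *-algebra structure on the cross product `B ⋊ H`
containing `B` and `H` as *-subalgebras. -/
theorem cross_product_star_structure
    {B H : Type} [Ring B] [Algebra ℂ B] [StarRing B] [StarModule ℂ B]
    [Ring H] [HopfAlgebra ℂ H] [StarRing H] [StarModule ℂ H]
    (ρ : H → List (H × H))
    (hρ : ∀ x, Coalgebra.comul (R := ℂ) x = toT (ρ x))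
    -- Hopf *-algebra axioms for H
    (hcomulStar : ∀ x : H, Coalgebra.comul (R := ℂ) (star x)
        = toT ((ρ x).map fun p => (star p.1, star p.2)))
    (hcounitStar : ∀ x : H, Coalgebra.counit (R := ℂ) (star x)
        = star (Coalgebra.counit (R := ℂ) (A := H) x))
    (hSstar : ∀ x : H, HopfAlgebra.antipode (R := ℂ)
        (star (HopfAlgebra.antipode (R := ℂ) (star x))) = x)
    -- the action of `H` on `B`, making `B` an `H`-module algebra
    (act : H →ₗ[ℂ] B →ₗ[ℂ] B)
    (hactmul : ∀ (g h : H) (b : B), act (g * h) b = act g (act h b))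
    (hactone : ∀ b : B, act 1 b = b)
    (hmodalg : ∀ (h : H) (b c : B),
        act h (b * c) = ((ρ h).map fun q => act q.1 b * act q.2 c).sum)
    (hmodone : ∀ h : H, act h 1 = Coalgebra.counit (R := ℂ) h • (1 : B))
    -- the unitarity condition
    (huni : ∀ (h : H) (b : B), star (act h b) = act (star (HopfAlgebra.antipode (R := ℂ) h)) (star b))
    -- the cross product `B ⋊ H` built on `B ⊗ H`
    (mulD : (B ⊗[ℂ] H) →ₗ[ℂ] (B ⊗[ℂ] H) →ₗ[ℂ] (B ⊗[ℂ] H))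
    (hmulD : ∀ (b : B) (h : H) (c : B) (g : H),
        mulD (b ⊗ₜ[ℂ] h) (c ⊗ₜ[ℂ] g)
          = ((ρ h).map fun q => (b * act q.1 c) ⊗ₜ[ℂ] (q.2 * g)).sum) :
    ∃ st : B ⊗[ℂ] H → B ⊗[ℂ] H,
      (∀ x y, st (x + y) = st x + st y) ∧
      (∀ (c : ℂ) (x : B ⊗[ℂ] H), st (c • x) = (starRingEnd ℂ) c • st x) ∧
      -- the defining formula `(b ⊗ h)* = (1 ⊗ h*)(b* ⊗ 1)`
      (∀ (b : B) (h : H),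
          st (b ⊗ₜ[ℂ] h) = mulD ((1 : B) ⊗ₜ[ℂ] star h) (star b ⊗ₜ[ℂ] (1 : H))) ∧
      -- involution
      (∀ x, st (st x) = x) ∧
      -- antimultiplicativity
      (∀ x y, st (mulD x y) = mulD (st y) (st x)) ∧
      -- `B` and `H` are *-subalgebras
      (∀ b : B, st (b ⊗ₜ[ℂ] (1 : H)) = star b ⊗ₜ[ℂ] (1 : H)) ∧
      (∀ h : H, st ((1 : B) ⊗ₜ[ℂ] h) = (1 : B) ⊗ₜ[ℂ] star h) :=
  cross_product_star_structure_general ρ hρ hcomulStar act hactmul hactone hmodalg hmodone huni mulD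
    hmulD
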